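/- arXiv:2511.14568 — 3 statements merged into one kernel-verified Lean document; each statement's English description precedes it below -/
import Mathlib

section
/- Let f, g ∈ ℝ⟦X⟧ be delta series (i.e., each has zero constant coefficient and nonzero coefficient of X) such that f∘g = X and g∘f = X. Define A(n,k) := c_n(f^k/k!) and B(n,k) := c_n(g^k/k!) for n, k ∈ ℕ. Then for all natural numbers l ≤ n one has Σ_{k=l}^{n} A(n,k)·B(k,l) = δ_{n,l} and Σ_{k=l}^{n} B(n,k)·A(k,l) = δ_{n,l}, where δ_{n,l} is the Kronecker delta. -/
open PowerSeries Finset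

noncomputable section

/-- `cN n F = n! * (coefficient of X^n in F)`. -/
def cN (n : ℕ) (F : PowerSeries ℝ) : ℝ := (n.factorial : ℝ) * PowerSeries.coeff n F

/-- Formal substitution `F ∘ G` (faithful when `G` has zero constant coefficient). -/
def pcomp (F G : PowerSeries ℝ) : PowerSeries ℝ :=
  PowerSeries.mk fun n =>
    ∑ k ∈ Finset.range (n + 1), (PowerSeries.coeff k F) * (PowerSeries.coeff n (G ^ k))

/-- The formal series of log(1+X). -/
def L : PowerSeries ℝ := PowerSeries.mk fun n => if n = 0 then 0 else (-1 : ℝ) ^ (n - 1) / n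

/-- Falling factorial `(y)_m`. -/
def ff (y : ℝ) (m : ℕ) : ℝ := ∏ i ∈ Finset.range m, (y - i)

/-- Rising factorial `⟨y⟩_m`. -/
def rf (y : ℝ) (m : ℕ) : ℝ := ∏ i ∈ Finset.range m, (y + i)

/-- Degenerate falling factorial `(x)_{n,λ}`. -/
def ffl (x : ℝ) (n : ℕ) (lam : ℝ) : ℝ := ∏ i ∈ Finset.range n, (x - i * lam)

/-- Stirling numbers of the second kind. -/
def S2 (n k : ℕ) : ℝ :=
  (k.factorial : ℝ)⁻¹ * ∑ j ∈ Finset.range (k + 1), (-1 : ℝ) ^ (k - j) * (k.choose j) * (j : ℝ) ^ n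

/-- The falling factorial polynomial `x(x-1)⋯(x-n+1)`. -/
def fallingPoly (n : ℕ) : Polynomial ℝ := ∏ i ∈ Finset.range n, (Polynomial.X - Polynomial.C (i : ℝ))

/-- (Signed) Stirling numbers of the first kind. -/
def S1 (n k : ℕ) : ℝ := (fallingPoly n).coeff k

/-- Degenerate Stirling numbers of the second kind. -/
def S2d (lam : ℝ) (n k : ℕ) : ℝ :=
  (k.factorial : ℝ)⁻¹ *
    ∑ j ∈ Finset.range (k + 1), (-1 : ℝ) ^ (k - j) * (k.choose j) * ffl (j : ℝ) n lam

/-- Formal degenerate exponential `e_λ`. -/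
def degExp (lam : ℝ) : PowerSeries ℝ := PowerSeries.mk fun n => ffl 1 n lam / n.factorial

/-- Formal degenerate logarithm `Λ_λ` of `1+X`. -/
def degLog (lam : ℝ) : PowerSeries ℝ :=
  lam⁻¹ • PowerSeries.mk fun n => if n = 0 then 0 else ff lam n / n.factorial

/-- Degenerate Stirling numbers of the first kind. -/
def S1d (lam : ℝ) (n k : ℕ) : ℝ := cN n ((k.factorial : ℝ)⁻¹ • (degLog lam) ^ k)

/-- Binomial series `(1+X)^c`. -/
def binser (c : ℝ) : PowerSeries ℝ := PowerSeries.mk fun n => ff c n / n.factorial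

/-- Frobenius–Euler numbers of order `j`. -/
def FE (u : ℝ) (j n : ℕ) : ℝ :=
  cN n (((1 - u) • (PowerSeries.exp ℝ - PowerSeries.C u)⁻¹) ^ j)

/-
The power series `g ^ l / l!` composed with `f` is `(g ∘ f) ^ l / l! = X ^ l / l!`. Since composition
with `f` is a ring homomorphism sending `X ^ k` to `f ^ k`, reading off the coefficient of `X ^ n`
expresses `δ_{n,l}` as `∑_k B(k,l) A(n,k)`; the sum runs over `l ≤ k ≤ n` because `g ^ l` and `f ^ k`
have order at least `l` and `k`. Exchanging the roles of `f` and `g` gives the second identity.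
-/

namespace PowerSeries

variable {R : Type*} [CommRing R]

theorem le_of_coeff_pow_ne_zero {h : R⟦X⟧} (h0 : constantCoeff h = 0) {n k : ℕ}
    (hnk : coeff n (h ^ k) ≠ 0) : k ≤ n := by
  by_contra! hlt
  exact hnk <| coeff_of_lt_order n <|
    (Nat.cast_lt.2 hlt).trans_le (le_order_pow_of_constantCoeff_eq_zero k h0)

theorem sum_Icc_coeff_pow_mul_coeff_pow_of_subst_eq_X {f g : R⟦X⟧} (hf0 : constantCoeff f = 0)
    (hg0 : constantCoeff g = 0) (hgf : g.subst f = X) (n l : ℕ) :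
    ∑ k ∈ Icc l n, coeff k (g ^ l) * coeff n (f ^ k) = if n = l then 1 else 0 := by
  have hf : HasSubst f := HasSubst.of_constantCoeff_zero' hf0
  have hsubst : (g ^ l).subst f = X ^ l := by rw [subst_pow hf, hgf]
  rw [← coeff_X_pow, ← hsubst, coeff_subst' hf]
  refine (finsum_eq_finsetSum_of_support_subset _ fun k hk => ?_).symm
  simpa using ⟨le_of_coeff_pow_ne_zero hg0 (left_ne_zero_of_mul hk),
    le_of_coeff_pow_ne_zero hf0 (right_ne_zero_of_mul hk)⟩

end PowerSeries

theorem pcomp_eq_subst (F : PowerSeries ℝ) {h : PowerSeries ℝ} (h0 : constantCoeff h = 0) :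
    pcomp F h = F.subst h := by
  ext n
  rw [pcomp, coeff_mk, coeff_subst' (HasSubst.of_constantCoeff_zero' h0)]
  refine (finsum_eq_finsetSum_of_support_subset _ fun k hk => ?_).symm
  simpa [Nat.lt_succ_iff] using le_of_coeff_pow_ne_zero h0 (right_ne_zero_of_mul hk)

theorem cN_inv_factorial_smul_pow (n k : ℕ) (F : PowerSeries ℝ) :
    cN n ((k.factorial : ℝ)⁻¹ • F ^ k) = n.factorial / k.factorial * coeff n (F ^ k) := by
  rw [cN, map_smul, smul_eq_mul]
  ring

theorem sum_Icc_cN_mul_cN_of_pcomp_eq_X {f g : PowerSeries ℝ} (hf0 : constantCoeff f = 0)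
    (hg0 : constantCoeff g = 0) (hgf : pcomp g f = X) (n l : ℕ) :
    ∑ k ∈ Icc l n, cN n ((k.factorial : ℝ)⁻¹ • f ^ k) * cN k ((l.factorial : ℝ)⁻¹ • g ^ l) =
      if n = l then 1 else 0 := by
  have hfac (m : ℕ) : (m.factorial : ℝ) ≠ 0 := Nat.cast_ne_zero.2 m.factorial_ne_zero
  have hterm (k : ℕ) :
      cN n ((k.factorial : ℝ)⁻¹ • f ^ k) * cN k ((l.factorial : ℝ)⁻¹ • g ^ l) =
        n.factorial / l.factorial * (coeff k (g ^ l) * coeff n (f ^ k)) := by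
    rw [cN_inv_factorial_smul_pow, cN_inv_factorial_smul_pow]
    field_simp [hfac k]
  rw [sum_congr rfl fun k _ => hterm k, ← mul_sum,
    sum_Icc_coeff_pow_mul_coeff_pow_of_subst_eq_X hf0 hg0 (by rw [← pcomp_eq_subst g hf0, hgf])]
  split_ifs with hnl
  · rw [hnl, div_self (hfac l), one_mul]
  · rw [mul_zero]

theorem stmt0_general (f g : PowerSeries ℝ)
    (hf0 : PowerSeries.coeff 0 f = 0)
    (hg0 : PowerSeries.coeff 0 g = 0)
    (hfg : pcomp f g = PowerSeries.X) (hgf : pcomp g f = PowerSeries.X)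
    (A B : ℕ → ℕ → ℝ)
    (hA : ∀ n k, A n k = cN n ((k.factorial : ℝ)⁻¹ • f ^ k))
    (hB : ∀ n k, B n k = cN n ((k.factorial : ℝ)⁻¹ • g ^ k)) :
    ∀ n l : ℕ, l ≤ n →
      (∑ k ∈ Finset.Icc l n, A n k * B k l) = (if n = l then (1 : ℝ) else 0) ∧
      (∑ k ∈ Finset.Icc l n, B n k * A k l) = (if n = l then (1 : ℝ) else 0) := by
  rw [coeff_zero_eq_constantCoeff_apply] at hf0 hg0
  intro n l _
  simp only [hA, hB]
  exact ⟨sum_Icc_cN_mul_cN_of_pcomp_eq_X hf0 hg0 hgf n l,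
    sum_Icc_cN_mul_cN_of_pcomp_eq_X hg0 hf0 hfg n l⟩

theorem stmt0 (f g : PowerSeries ℝ)
    (hf0 : PowerSeries.coeff 0 f = 0) (hf1 : PowerSeries.coeff 1 f ≠ 0)
    (hg0 : PowerSeries.coeff 0 g = 0) (hg1 : PowerSeries.coeff 1 g ≠ 0)
    (hfg : pcomp f g = PowerSeries.X) (hgf : pcomp g f = PowerSeries.X)
    (A B : ℕ → ℕ → ℝ)
    (hA : ∀ n k, A n k = cN n ((k.factorial : ℝ)⁻¹ • f ^ k))
    (hB : ∀ n k, B n k = cN n ((k.factorial : ℝ)⁻¹ • g ^ k)) :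
    ∀ n l : ℕ, l ≤ n →
      (∑ k ∈ Finset.Icc l n, A n k * B k l) = (if n = l then (1 : ℝ) else 0) ∧
      (∑ k ∈ Finset.Icc l n, B n k * A k l) = (if n = l then (1 : ℝ) else 0) :=
  stmt0_general f g hf0 hg0 hfg hgf A B hA hB
end
end

section
/- Let m be a positive integer and 0 < p ≤ 1 (binomial parameters). Set e := (1 + p·(Exp - 1))^m - 1 ∈ ℝ⟦X⟧ (the m-th ring power). Then for all natural numbers n ≥ k: c_n( e^k / k! ) = Σ_{j=k}^{n} Σ_{i=j}^{n} m^j·p^i·S₂(j,k)·S₁(i,j)·S₂(n,i). -/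
open PowerSeries Finset

noncomputable section

/-!
With `P = (1 + X)^m - 1` we have `e = P(p(Exp - 1))`, so
`e^k/k! = ∑ᵢ ([Xⁱ] P^k / k!) pⁱ (Exp - 1)ⁱ`, and `c_n((Exp - 1)ⁱ) = i! S₂(n,i)`.
For the polynomial coefficient, expanding `P^k = ∑ₗ (-1)^(k-l) C(k,l) (1 + X)^(ml)` gives
`i! [Xⁱ] P^k = ∑ₗ (-1)^(k-l) C(k,l) (ml)ᵢ` with the falling factorial `(ml)ᵢ = ∑ⱼ S₁(i,j) (ml)ʲ`;
summing over `l` first, the alternating sum of `lʲ` is `k! S₂(j,k)`.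
-/

theorem sub_one_pow_eq_sum {R : Type*} [CommRing R] (x : R) (k : ℕ) :
    (x - 1) ^ k = ∑ l ∈ range (k + 1), (-1) ^ (k - l) * (k.choose l : R) * x ^ l := by
  rw [sub_eq_add_neg, add_pow]
  exact sum_congr rfl fun l _ => by ring

theorem factorial_mul_S2 (n k : ℕ) :
    (k.factorial : ℝ) * S2 n k
      = ∑ l ∈ range (k + 1), (-1) ^ (k - l) * (k.choose l : ℝ) * (l : ℝ) ^ n := by
  rw [S2, ← mul_assoc, mul_inv_cancel₀ (by exact_mod_cast k.factorial_ne_zero), one_mul]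

theorem cN_exp_sub_one_pow (n k : ℕ) :
    cN n ((exp ℝ - 1) ^ k) = k.factorial * S2 n k := by
  rw [factorial_mul_S2, cN, sub_one_pow_eq_sum, map_sum, mul_sum]
  refine sum_congr rfl fun l _ => ?_
  have hC : ((-1) ^ (k - l) * (k.choose l : ℝ⟦X⟧)) = C ((-1) ^ (k - l) * (k.choose l : ℝ)) := by
    simp
  rw [hC, coeff_C_mul, exp_pow_eq_rescale_exp, coeff_rescale, coeff_exp, map_div₀, map_one,
    map_natCast]
  field_simp

theorem S2_eq_zero_of_lt {n k : ℕ} (h : n < k) : S2 n k = 0 := by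
  have hdvd : (X : ℝ⟦X⟧) ^ k ∣ (exp ℝ - 1) ^ k :=
    pow_dvd_pow_of_dvd (X_dvd_iff.mpr (by simp)) k
  have hcN := cN_exp_sub_one_pow n k
  rw [cN, X_pow_dvd_iff.mp hdvd n h, mul_zero] at hcN
  exact (mul_eq_zero.mp hcN.symm).resolve_left (by exact_mod_cast k.factorial_ne_zero)

theorem fallingPoly_eq_descPochhammer (n : ℕ) : fallingPoly n = descPochhammer ℝ n := by
  induction n with
  | zero => simp [fallingPoly]
  | succ n ih =>
    rw [fallingPoly, prod_range_succ, ← fallingPoly, ih, descPochhammer_succ_right]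
    simp

theorem sum_S1_mul_pow (i : ℕ) (y : ℝ) :
    ∑ j ∈ range (i + 1), S1 i j * y ^ j = (descPochhammer ℝ i).eval y := by
  rw [Polynomial.eval_eq_sum_range' (n := i + 1) (by rw [descPochhammer_natDegree]; omega)]
  simp only [S1, fallingPoly_eq_descPochhammer]

theorem coeff_one_add_X_pow_sub_one_pow (m k i : ℕ) :
    (((1 + Polynomial.X) ^ m - 1) ^ k : Polynomial ℝ).coeff i
      = ∑ l ∈ range (k + 1), (-1) ^ (k - l) * (k.choose l : ℝ) * ((m * l).choose i : ℝ) := by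
  rw [sub_one_pow_eq_sum, Polynomial.finsetSum_coeff]
  refine sum_congr rfl fun l _ => ?_
  have hC : ((-1) ^ (k - l) * (k.choose l : Polynomial ℝ))
      = Polynomial.C ((-1) ^ (k - l) * (k.choose l : ℝ)) := by
    simp
  rw [hC, Polynomial.coeff_C_mul, ← pow_mul, Polynomial.coeff_one_add_X_pow]

theorem factorial_mul_coeff_eq_sum_S2_mul_S1 (m k i : ℕ) :
    (i.factorial : ℝ) * (((1 + Polynomial.X) ^ m - 1) ^ k : Polynomial ℝ).coeff i
      = k.factorial * ∑ j ∈ range (i + 1), (m : ℝ) ^ j * S2 j k * S1 i j := by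
  have hterm : ∀ j, (k.factorial : ℝ) * ((m : ℝ) ^ j * S2 j k * S1 i j)
      = ∑ l ∈ range (k + 1),
          (-1) ^ (k - l) * (k.choose l : ℝ) * (S1 i j * ((m * l : ℕ) : ℝ) ^ j) := by
    intro j
    rw [show (k.factorial : ℝ) * ((m : ℝ) ^ j * S2 j k * S1 i j)
      = (k.factorial * S2 j k) * (S1 i j * (m : ℝ) ^ j) by ring, factorial_mul_S2, sum_mul]
    exact sum_congr rfl fun l _ => by push_cast; ring
  simp only [mul_sum, hterm]
  rw [sum_comm, coeff_one_add_X_pow_sub_one_pow, mul_sum]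
  refine sum_congr rfl fun l _ => ?_
  rw [← mul_sum, sum_S1_mul_pow, descPochhammer_eval_eq_descFactorial,
    Nat.descFactorial_eq_factorial_mul_choose]
  push_cast
  ring

theorem cN_smul (n : ℕ) (c : ℝ) (F : PowerSeries ℝ) : cN n (c • F) = c * cN n F := by
  rw [cN, cN, map_smul, smul_eq_mul, mul_left_comm]

theorem cN_aeval_smul_exp_sub_one (Q : Polynomial ℝ) (p : ℝ) (n : ℕ) :
    cN n (Polynomial.aeval (p • (exp ℝ - 1)) Q)
      = ∑ i ∈ range (n + 1), i.factorial * Q.coeff i * (p ^ i * S2 n i) := by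
  have hterm : ∀ i, (n.factorial : ℝ) * coeff n (Q.coeff i • (p • (exp ℝ - 1)) ^ i)
      = i.factorial * Q.coeff i * (p ^ i * S2 n i) := by
    intro i
    rw [show (i.factorial : ℝ) * Q.coeff i * (p ^ i * S2 n i)
        = Q.coeff i * p ^ i * (i.factorial * S2 n i) by ring,
      smul_pow, ← cN_exp_sub_one_pow, cN, map_smul, map_smul, smul_eq_mul, smul_eq_mul]
    ring
  rw [Polynomial.aeval_eq_sum_range' (n := max (Q.natDegree + 1) (n + 1)) (by omega), cN, map_sum,
    mul_sum]
  simp only [hterm]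
  refine (sum_subset (range_subset_range.mpr (le_max_right _ _)) fun i _ hi => ?_).symm
  rw [S2_eq_zero_of_lt (by simpa using hi), mul_zero, mul_zero]

theorem stmt3_general (m : ℕ) (p : ℝ) (n k : ℕ) :
    cN n ((k.factorial : ℝ)⁻¹ • ((1 + p • (PowerSeries.exp ℝ - 1)) ^ m - 1) ^ k)
      = ∑ j ∈ Finset.Icc k n, ∑ i ∈ Finset.Icc j n,
          (m : ℝ) ^ j * p ^ i * S2 j k * S1 i j * S2 n i := by
  have hsubst : ((1 + p • (exp ℝ - 1)) ^ m - 1) ^ k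
      = Polynomial.aeval (p • (exp ℝ - 1)) (((1 + Polynomial.X) ^ m - 1) ^ k : Polynomial ℝ) := by
    simp
  have hterm : ∀ i, (k.factorial : ℝ)⁻¹ * (i.factorial
        * (((1 + Polynomial.X) ^ m - 1) ^ k : Polynomial ℝ).coeff i * (p ^ i * S2 n i))
      = ∑ j ∈ range (i + 1), (m : ℝ) ^ j * p ^ i * S2 j k * S1 i j * S2 n i := by
    intro i
    rw [factorial_mul_coeff_eq_sum_S2_mul_S1, ← mul_assoc,
      inv_mul_cancel_left₀ (by exact_mod_cast k.factorial_ne_zero), sum_mul]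
    exact sum_congr rfl fun j _ => by ring
  have hlower : ∑ j ∈ Icc k n, ∑ i ∈ Icc j n, (m : ℝ) ^ j * p ^ i * S2 j k * S1 i j * S2 n i
      = ∑ j ∈ range (n + 1), ∑ i ∈ Icc j n, (m : ℝ) ^ j * p ^ i * S2 j k * S1 i j * S2 n i := by
    refine sum_subset (fun j hj => mem_range.mpr (Nat.lt_succ_of_le (mem_Icc.mp hj).2))
      fun j hjn hj => ?_
    have hjk : j < k := by simp only [mem_range, mem_Icc] at hjn hj; omega
    simp [S2_eq_zero_of_lt hjk]
  rw [hsubst, cN_smul, cN_aeval_smul_exp_sub_one, mul_sum, hlower]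
  simp only [hterm, range_eq_Ico, ← Ico_add_one_right_eq_Icc]
  exact (sum_Ico_Ico_comm 0 (n + 1) _).symm

theorem stmt3 (m : ℕ) (hm : 0 < m) (p : ℝ) (hp0 : 0 < p) (hp1 : p ≤ 1) (n k : ℕ)
    (hkn : k ≤ n) :
    cN n ((k.factorial : ℝ)⁻¹ • ((1 + p • (PowerSeries.exp ℝ - 1)) ^ m - 1) ^ k)
      = ∑ j ∈ Finset.Icc k n, ∑ i ∈ Finset.Icc j n,
          (m : ℝ) ^ j * p ^ i * S2 j k * S1 i j * S2 n i :=
  stmt3_general m p n k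
end
end

section
/- Let α > 0 (Poisson parameter) and let λ ∈ ℝ, λ ≠ 0. Set e := Exp∘(α·(e_λ - 1)) - 1 ∈ ℝ⟦X⟧ and ē := Λ_λ∘(α^{-1}·L) ∈ ℝ⟦X⟧. Then for all natural numbers n ≥ k: c_n( e^k / k! ) = Σ_{j=k}^{n} α^j·S₂(j,k)·S_{2,λ}(n,j) and c_n( ē^k / k! ) = Σ_{j=k}^{n} α^{-j}·S_{1,λ}(j,k)·S₁(n,j). -/
/-! Both identities are instances of the composition rule for exponential generating
functions: if `F` and `G` have zero constant term, then
`c_n((F ∘ G)^k / k!) = Σ_j c_j(F^k / k!) · c_n(G^j / j!)`.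
The series `e_λ^m` is the solution of `(1 + λX) f' = m f` with `f(0) = 1`, whose coefficients
are `(m)_{n,λ} / n!`; expanding `(e_λ - 1)^k` binomially gives
`c_n((e_λ - 1)^k / k!) = S_{2,λ}(n,k)`, and `Exp = e_0` gives the ordinary `S₂`.
On the other side `(1 + X)(L^{j+1})' = (j+1) L^j` turns into the recurrence of `S₁`,
so `c_n(L^j / j!) = S₁(n,j)`. -/

open PowerSeries Finset

noncomputable section

lemma coeff_pow_eq_zero_of_lt {G : ℝ⟦X⟧} (hG : constantCoeff G = 0) {n k : ℕ} (h : n < k) :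
    coeff n (G ^ k) = 0 :=
  coeff_of_lt_order n ((Nat.cast_lt.mpr h).trans_le (le_order_pow_of_constantCoeff_eq_zero k hG))

lemma pcomp_eq_subst_s7 (F : ℝ⟦X⟧) {G : ℝ⟦X⟧} (hG : constantCoeff G = 0) :
    pcomp F G = F.subst G := by
  ext n
  rw [pcomp, coeff_mk, coeff_subst' (HasSubst.of_constantCoeff_zero' hG),
    finsum_eq_sum_of_support_subset _ (s := range (n + 1))]
  · simp only [smul_eq_mul]
  · intro d hd
    rw [coe_range, Set.mem_Iio]
    by_contra! hnd
    exact hd (by simp [coeff_pow_eq_zero_of_lt hG (Nat.lt_of_succ_le hnd)])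

lemma pcomp_pow (F : ℝ⟦X⟧) {G : ℝ⟦X⟧} (hG : constantCoeff G = 0) (k : ℕ) :
    pcomp (F ^ k) G = pcomp F G ^ k := by
  rw [pcomp_eq_subst_s7 _ hG, pcomp_eq_subst_s7 _ hG, subst_pow (HasSubst.of_constantCoeff_zero' hG)]

lemma pcomp_sub_one (F : ℝ⟦X⟧) {G : ℝ⟦X⟧} (hG : constantCoeff G = 0) :
    pcomp F G - 1 = pcomp (F - 1) G := by
  rw [pcomp_eq_subst_s7 _ hG, pcomp_eq_subst_s7 _ hG,
    ← coe_substAlgHom (HasSubst.of_constantCoeff_zero' hG), map_sub, map_one]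

lemma cN_smul_pow (c : ℝ) (G : ℝ⟦X⟧) (n j : ℕ) :
    cN n ((j.factorial : ℝ)⁻¹ • (c • G) ^ j) =
      c ^ j * cN n ((j.factorial : ℝ)⁻¹ • G ^ j) := by
  simp only [cN, smul_pow, coeff_smul, smul_eq_mul]
  ring

lemma cN_pcomp_pow {F G : ℝ⟦X⟧} (hF : constantCoeff F = 0) (hG : constantCoeff G = 0)
    (n k : ℕ) :
    cN n ((k.factorial : ℝ)⁻¹ • pcomp F G ^ k) =
      ∑ j ∈ Icc k n,
        cN j ((k.factorial : ℝ)⁻¹ • F ^ k) * cN n ((j.factorial : ℝ)⁻¹ • G ^ j) := by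
  have hsub : Icc k n ⊆ range (n + 1) := fun j hj => by
    rw [mem_Icc] at hj; rw [mem_range]; omega
  rw [← pcomp_pow F hG, cN, coeff_smul, pcomp, coeff_mk, smul_eq_mul, mul_sum, mul_sum,
    ← sum_subset hsub]
  · refine sum_congr rfl fun j _ => ?_
    simp only [cN, coeff_smul, smul_eq_mul]
    field_simp
  · intro j hj hjk
    rw [mem_range] at hj; rw [mem_Icc] at hjk
    rw [coeff_pow_eq_zero_of_lt hF (by omega)]
    ring

lemma coeff_one_add_C_mul_X_mul_derivative (a : ℝ) (f : ℝ⟦X⟧) (n : ℕ) :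
    coeff n ((1 + C a * X) * d⁄dX ℝ f) =
      ((n : ℝ) + 1) * coeff (n + 1) f + a * n * coeff n f := by
  rcases n with _ | n
  · rw [add_mul, one_mul, mul_assoc, map_add, coeff_C_mul, coeff_zero_X_mul, coeff_derivative]
    simp
  · rw [add_mul, one_mul, mul_assoc, map_add, coeff_C_mul, coeff_succ_X_mul, coeff_derivative,
      coeff_derivative]
    push_cast
    ring

lemma coeff_eq_ffl_of_derivative {f : ℝ⟦X⟧} {a c : ℝ} (h0 : constantCoeff f = 1)
    (hf : (1 + C a * X) * d⁄dX ℝ f = C c * f) (n : ℕ) :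
    coeff n f = ffl c n a / n.factorial := by
  induction n with
  | zero => simpa [ffl] using h0
  | succ n ih =>
    have hn := congrArg (coeff n) hf
    rw [coeff_one_add_C_mul_X_mul_derivative, coeff_C_mul, ih] at hn
    rw [ffl, prod_range_succ, ← ffl, Nat.factorial_succ, Nat.cast_mul, Nat.cast_succ]
    field_simp at hn ⊢
    linear_combination hn

lemma one_add_C_mul_X_mul_derivative_pow {f : ℝ⟦X⟧} {a c : ℝ}
    (hf : (1 + C a * X) * d⁄dX ℝ f = C c * f) (m : ℕ) :
    (1 + C a * X) * d⁄dX ℝ (f ^ m) = C (m * c) * f ^ m := by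
  rcases m with _ | m
  · simp
  · rw [Derivation.leibniz_pow, smul_eq_mul, nsmul_eq_mul, Nat.add_sub_cancel, map_mul,
      map_natCast, pow_succ]
    linear_combination (↑(m + 1) * f ^ m) * hf

lemma derivative_degExp (lam : ℝ) :
    (1 + C lam * X) * d⁄dX ℝ (degExp lam) = C 1 * degExp lam := by
  ext n
  rw [coeff_one_add_C_mul_X_mul_derivative, map_one, one_mul, degExp, coeff_mk, coeff_mk,
    ffl, prod_range_succ, ← ffl, Nat.factorial_succ, Nat.cast_mul, Nat.cast_succ]
  field_simp
  ring

lemma coeff_degExp_pow (lam : ℝ) (m n : ℕ) :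
    coeff n (degExp lam ^ m) = ffl m n lam / n.factorial := by
  refine coeff_eq_ffl_of_derivative ?_ ?_ n
  · simp [degExp, ffl]
  · simpa using one_add_C_mul_X_mul_derivative_pow (derivative_degExp lam) m

lemma constantCoeff_degExp_sub_one (lam : ℝ) : constantCoeff (degExp lam - 1) = 0 := by
  rw [map_sub, map_one, degExp, constantCoeff_mk]
  simp [ffl]

lemma coeff_sub_one_pow (f : ℝ⟦X⟧) (k n : ℕ) :
    coeff n ((f - 1) ^ k) =
      ∑ m ∈ range (k + 1), (-1 : ℝ) ^ (k - m) * k.choose m * coeff n (f ^ m) := by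
  rw [sub_pow, map_sum]
  refine sum_congr rfl fun m hm => ?_
  have hmk : m + k = (k - m) + 2 * m := by have := mem_range.mp hm; omega
  rw [hmk, one_pow, mul_one, pow_add, pow_mul, neg_one_sq, one_pow, mul_one,
    show (-1 : ℝ⟦X⟧) ^ (k - m) * f ^ m * (k.choose m : ℝ⟦X⟧) =
        C ((-1 : ℝ) ^ (k - m) * k.choose m) * f ^ m by
      simp only [map_mul, map_pow, map_neg, map_one, map_natCast]; ring,
    coeff_C_mul]

lemma cN_degExp_sub_one_pow (lam : ℝ) (n k : ℕ) :
    cN n ((k.factorial : ℝ)⁻¹ • (degExp lam - 1) ^ k) = S2d lam n k := by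
  rw [cN, coeff_smul, coeff_sub_one_pow, S2d, smul_eq_mul, mul_left_comm, mul_sum]
  congr 1
  refine sum_congr rfl fun m _ => ?_
  rw [coeff_degExp_pow]
  field_simp

lemma exp_eq_degExp_zero : exp ℝ = degExp 0 := by
  ext n
  simp [degExp, ffl, coeff_exp]

lemma S2_eq_S2d_zero (n k : ℕ) : S2 n k = S2d 0 n k := by
  simp [S2, S2d, ffl]

lemma constantCoeff_L : constantCoeff L = 0 := by
  simp [L, ← coeff_zero_eq_constantCoeff_apply]

lemma derivative_L : (1 + C 1 * X) * d⁄dX ℝ L = 1 := by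
  ext n
  rw [coeff_one_add_C_mul_X_mul_derivative, L, coeff_mk, coeff_mk, coeff_one]
  rcases n with _ | n
  · simp
  · simp only [Nat.add_one_ne_zero, if_false, Nat.add_sub_cancel]
    push_cast
    field_simp
    ring

lemma derivative_L_pow (j : ℕ) :
    (1 + C 1 * X) * d⁄dX ℝ (L ^ (j + 1)) = C ((j : ℝ) + 1) * L ^ j := by
  rw [Derivation.leibniz_pow, smul_eq_mul, nsmul_eq_mul, Nat.add_sub_cancel,
    ← map_natCast (C (R := ℝ)), Nat.cast_succ]
  linear_combination (C ((j : ℝ) + 1) * L ^ j) * derivative_L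

lemma S1_succ_succ (n j : ℕ) : S1 (n + 1) (j + 1) = S1 n j - n * S1 n (j + 1) := by
  rw [S1, S1, S1, fallingPoly, prod_range_succ, ← fallingPoly, mul_sub, Polynomial.coeff_sub,
    Polynomial.coeff_mul_X, Polynomial.coeff_mul_C, mul_comm]

lemma S1_succ_zero (n : ℕ) : S1 (n + 1) 0 = 0 := by
  simp [S1, fallingPoly, prod_range_succ', Polynomial.coeff_zero_eq_eval_zero]

lemma cN_L_pow (n j : ℕ) : cN n ((j.factorial : ℝ)⁻¹ • L ^ j) = S1 n j := by
  induction n generalizing j with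
  | zero =>
    rcases j with _ | j
    · simp [cN, S1, fallingPoly]
    · simp [cN, S1, fallingPoly, coeff_pow_eq_zero_of_lt constantCoeff_L (Nat.succ_pos j),
        Polynomial.coeff_one]
  | succ n ih =>
    rcases j with _ | j
    · simp [cN, S1_succ_zero, coeff_one]
    · have hrec := congrArg (coeff n) (derivative_L_pow j)
      rw [coeff_one_add_C_mul_X_mul_derivative, coeff_C_mul] at hrec
      rw [S1_succ_succ, ← ih, ← ih]
      simp only [cN, coeff_smul, smul_eq_mul, Nat.factorial_succ, Nat.cast_mul, Nat.cast_succ]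
      field_simp
      linear_combination hrec

lemma constantCoeff_degLog (lam : ℝ) : constantCoeff (degLog lam) = 0 := by
  simp [degLog, ← coeff_zero_eq_constantCoeff_apply]

theorem stmt7_general (α lam : ℝ) (n k : ℕ) :
    cN n ((k.factorial : ℝ)⁻¹ • (pcomp (PowerSeries.exp ℝ) (α • (degExp lam - 1)) - 1) ^ k)
        = ∑ j ∈ Finset.Icc k n, α ^ j * S2 j k * S2d lam n j ∧
    cN n ((k.factorial : ℝ)⁻¹ • (pcomp (degLog lam) (α⁻¹ • L)) ^ k)
        = ∑ j ∈ Finset.Icc k n, α⁻¹ ^ j * S1d lam j k * S1 n j := by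
  constructor
  · have hG : constantCoeff (α • (degExp lam - 1)) = 0 := by
      rw [constantCoeff_smul, constantCoeff_degExp_sub_one, smul_zero]
    rw [exp_eq_degExp_zero, pcomp_sub_one _ hG, cN_pcomp_pow (constantCoeff_degExp_sub_one 0) hG]
    refine sum_congr rfl fun j _ => ?_
    rw [cN_degExp_sub_one_pow, cN_smul_pow, cN_degExp_sub_one_pow, ← S2_eq_S2d_zero]
    ring
  · have hG : constantCoeff (α⁻¹ • L) = 0 := by
      rw [constantCoeff_smul, constantCoeff_L, smul_zero]
    rw [cN_pcomp_pow (constantCoeff_degLog lam) hG]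
    refine sum_congr rfl fun j _ => ?_
    rw [cN_smul_pow, cN_L_pow, S1d]
    ring

theorem stmt7 (α lam : ℝ) (hα : 0 < α) (hlam : lam ≠ 0) (n k : ℕ) (hkn : k ≤ n) :
    cN n ((k.factorial : ℝ)⁻¹ • (pcomp (PowerSeries.exp ℝ) (α • (degExp lam - 1)) - 1) ^ k)
        = ∑ j ∈ Finset.Icc k n, α ^ j * S2 j k * S2d lam n j ∧
    cN n ((k.factorial : ℝ)⁻¹ • (pcomp (degLog lam) (α⁻¹ • L)) ^ k)
        = ∑ j ∈ Finset.Icc k n, α⁻¹ ^ j * S1d lam j k * S1 n j :=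
  stmt7_general α lam n k
end
end
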